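/- Let $\Omega = \{y \in \mathbb{R}^3 : y_2^2 + y_3^2 < 1,\ -1 < y_1 < 0\}$ and for $\delta > 0$ let $z_\delta = (\delta, 0, 0)$. For a natural number $m \geq 1$, the integral $\widetilde{I}_m(\delta) := \int_\Omega \frac{1}{|y|} \frac{-(y_1 - \delta)}{|y - z_\delta|^3}\, y_1^m \, dy$ equals $(-1)^m 2\pi \int_0^1 (y_1+\delta)\,y_1^m \left(\int_{y_1}^{\sqrt{y_1^2+1}} \frac{ds}{(s^2 + \delta(2y_1+\delta))^{3/2}}\right) dy_1$. -/

import Mathlib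

/-!
Split `ℝ³ = ℝ × ℝ²` with `t = y 0`. On each slice the integrand depends only on
`ρ² = (y 1)² + (y 2)²`, so polar coordinates reduce the disc integral to `2π ∫₀¹ ρ (…) dρ`, and
the substitution `s = √(t² + ρ²)` turns `|y - z_δ|² = s² + δ (δ - 2t)` into the stated kernel;
finally `t ↦ -t`. Fubini applies because `z_δ` lies at distance at least `δ` from `Ω`, so the
integrand is bounded by a multiple of `|y|⁻¹`, which is locally integrable in dimension three.
-/

open MeasureTheory Set Real

def unitDisc : Set (ℝ × ℝ) := {x | x.1 ^ 2 + x.2 ^ 2 < 1}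

lemma measurableSet_unitDisc : MeasurableSet unitDisc :=
  measurableSet_lt (by fun_prop) measurable_const

theorem integral_unitDisc_radial (g : ℝ → ℝ) :
    ∫ x in unitDisc, g (x.1 ^ 2 + x.2 ^ 2) = 2 * π * ∫ r in (0 : ℝ)..1, r * g (r ^ 2) := by
  have hS : Ioo (0 : ℝ) 1 ×ˢ Ioo (-π) π ⊆ polarCoord.target :=
    prod_mono Ioo_subset_Ioi_self subset_rfl
  have hpolar : EqOn (fun p : ℝ × ℝ => p.1 • unitDisc.indicator (fun x => g (x.1 ^ 2 + x.2 ^ 2))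
      (polarCoord.symm p)) ((Ioo (0 : ℝ) 1 ×ˢ Ioo (-π) π).indicator fun p => p.1 * g (p.1 ^ 2) * 1)
      polarCoord.target := by
    rintro ⟨r, θ⟩ ⟨hr, hθ⟩
    have hsq : (r * cos θ) ^ 2 + (r * sin θ) ^ 2 = r ^ 2 := by
      linear_combination r ^ 2 * cos_sq_add_sin_sq θ
    have hr1 : r ^ 2 < 1 ↔ r < 1 := pow_lt_one_iff_of_nonneg hr.le two_ne_zero
    simp only [indicator, unitDisc, mem_ofPred_eq, polarCoord_symm_apply, mem_prod, mem_Ioo, hsq,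
      hr1, smul_eq_mul, mul_one]
    split_ifs <;> simp_all
  rw [← integral_indicator measurableSet_unitDisc, ← integral_comp_polarCoord_symm,
    setIntegral_congr_fun polarCoord.open_target.measurableSet hpolar,
    setIntegral_indicator (measurableSet_Ioo.prod measurableSet_Ioo), inter_eq_right.2 hS,
    Measure.volume_eq_prod, setIntegral_prod_mul (fun r => r * g (r ^ 2)) (fun _ => (1 : ℝ)),
    intervalIntegral.integral_of_le zero_le_one, integral_Ioc_eq_integral_Ioo]
  simp only [integral_const, measureReal_restrict_apply_univ, Real.volume_real_Ioo, smul_eq_mul,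
    mul_one]
  rw [max_eq_left (by linarith [pi_pos])]
  ring

theorem integral_comp_sqrt_sq_add_sq {t : ℝ} (ht : t ≠ 0) {F : ℝ → ℝ} (hF : Continuous F)
    (a b : ℝ) :
    ∫ r in a..b, F √(t ^ 2 + r ^ 2) * (r / √(t ^ 2 + r ^ 2))
      = ∫ s in √(t ^ 2 + a ^ 2)..√(t ^ 2 + b ^ 2), F s := by
  have hpos (r : ℝ) : 0 < t ^ 2 + r ^ 2 := by positivity
  refine intervalIntegral.integral_comp_mul_deriv (fun r _ => ?_) ?_ hF
  · convert ((hasDerivAt_pow 2 r).const_add (t ^ 2)).sqrt (hpos r).ne' using 1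
    field_simp
    norm_num [mul_comm]
  · exact continuousOn_id.div (by fun_prop) fun r _ => (sqrt_pos.2 (hpos r)).ne'

/-- The integrand at a point `y` with `y 0 = t` and `(y 1)² + (y 2)² = q`. -/
noncomputable def axialIntegrand (m : ℕ) (δ t q : ℝ) : ℝ :=
  1 / √(t ^ 2 + q) * (-(t - δ) / √((t - δ) ^ 2 + q) ^ 3) * t ^ m

theorem integral_unitDisc_axialIntegrand (m : ℕ) {δ t : ℝ} (hδ : 0 < δ) (ht : t < 0) :
    ∫ x in unitDisc, axialIntegrand m δ t (x.1 ^ 2 + x.2 ^ 2)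
      = 2 * π * ((δ - t) * t ^ m *
          ∫ s in -t..√(t ^ 2 + 1), 1 / √(s ^ 2 + δ * (δ - 2 * t)) ^ 3) := by
  have hc : 0 < δ * (δ - 2 * t) := mul_pos hδ (by linarith)
  have hF : Continuous fun s => (δ - t) * t ^ m * (1 / √(s ^ 2 + δ * (δ - 2 * t)) ^ 3) :=
    continuous_const.mul <| continuous_const.div (by fun_prop) fun s => by positivity
  have hsubst := integral_comp_sqrt_sq_add_sq ht.ne hF 0 1
  rw [zero_pow two_ne_zero, add_zero, sqrt_sq_eq_abs, abs_of_neg ht, one_pow] at hsubst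
  rw [integral_unitDisc_radial, ← intervalIntegral.integral_const_mul ((δ - t) * t ^ m),
    ← hsubst]
  congr 1
  refine intervalIntegral.integral_congr fun r _ => ?_
  have hdist : √(t ^ 2 + r ^ 2) ^ 2 + δ * (δ - 2 * t) = (t - δ) ^ 2 + r ^ 2 := by
    rw [sq_sqrt (by positivity)]; ring
  simp only [axialIntegrand, hdist]
  ring

lemma norm_le_sqrt_sq_add_sq_add_sq (p : ℝ × ℝ × ℝ) :
    ‖p‖ ≤ √(p.1 ^ 2 + (p.2.1 ^ 2 + p.2.2 ^ 2)) := by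
  simp only [Prod.norm_def, Real.norm_eq_abs]
  refine max_le (abs_le_sqrt ?_) (max_le (abs_le_sqrt ?_) (abs_le_sqrt ?_)) <;>
    nlinarith [sq_nonneg p.1, sq_nonneg p.2.1, sq_nonneg p.2.2]

lemma abs_axialIntegrand_le (m : ℕ) {δ t q : ℝ} (hδ : 0 < δ) (ht : t ∈ Icc (-1) 0) (hq : 0 ≤ q) :
    |axialIntegrand m δ t q| ≤ (δ + 1) / δ ^ 3 * (√(t ^ 2 + q))⁻¹ := by
  obtain ⟨ht₁, ht₀⟩ := ht
  have hdist : δ ≤ √((t - δ) ^ 2 + q) := le_sqrt_of_sq_le (by nlinarith)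
  have hkernel : (δ - t) / √((t - δ) ^ 2 + q) ^ 3 ≤ (δ + 1) / δ ^ 3 :=
    div_le_div₀ (by positivity) (by linarith) (by positivity) (pow_le_pow_left₀ hδ.le hdist 3)
  have hpow : |t| ^ m ≤ 1 := pow_le_one₀ (abs_nonneg t) (abs_le.2 ⟨by linarith, by linarith⟩)
  rw [axialIntegrand, neg_sub, abs_mul, abs_mul, abs_pow, abs_of_nonneg (by positivity),
    abs_of_nonneg (div_nonneg (by linarith) (by positivity)), one_div]
  calc (√(t ^ 2 + q))⁻¹ * ((δ - t) / √((t - δ) ^ 2 + q) ^ 3) * |t| ^ m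
      ≤ (√(t ^ 2 + q))⁻¹ * ((δ + 1) / δ ^ 3) * 1 := by gcongr
    _ = (δ + 1) / δ ^ 3 * (√(t ^ 2 + q))⁻¹ := by ring

theorem integrableOn_axialIntegrand (m : ℕ) {δ : ℝ} (hδ : 0 < δ) :
    IntegrableOn (fun p : ℝ × ℝ × ℝ => axialIntegrand m δ p.1 (p.2.1 ^ 2 + p.2.2 ^ 2))
      (Ioo (-1) 0 ×ˢ unitDisc) := by
  set S := Ioo (-1 : ℝ) 0 ×ˢ unitDisc
  set f := fun p : ℝ × ℝ × ℝ => axialIntegrand m δ p.1 (p.2.1 ^ 2 + p.2.2 ^ 2)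
  have hS : MeasurableSet S := measurableSet_Ioo.prod measurableSet_unitDisc
  have : (volume : Measure (ℝ × ℝ × ℝ)).IsAddHaarMeasure := by
    rw [Measure.volume_eq_prod]; infer_instance
  have hdim : Module.finrank ℝ (ℝ × ℝ × ℝ) = 3 := by simp
  have hS_ball : S ⊆ Metric.closedBall 0 2 := by
    rintro p ⟨⟨ht₁, ht₀⟩, hx⟩
    rw [mem_closedBall_zero_iff]
    refine (norm_le_sqrt_sq_add_sq_add_sq p).trans (sqrt_le_iff.2 ⟨zero_le_two, ?_⟩)
    simp only [unitDisc, mem_ofPred_eq] at hx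
    nlinarith
  have hbound (p : ℝ × ℝ × ℝ) : ‖S.indicator f p‖ ≤ (δ + 1) / δ ^ 3 * ‖p‖ ^ (-1 : ℝ) := by
    by_cases hp : p ∈ S
    · have hp₀ : 0 < ‖p‖ := norm_pos_iff.2 fun h => hp.1.2.ne (by simp [h])
      rw [indicator_of_mem hp, Real.norm_eq_abs, rpow_neg_one]
      refine (abs_axialIntegrand_le m hδ (Ioo_subset_Icc_self hp.1) (by positivity)).trans ?_
      gcongr
      exact norm_le_sqrt_sq_add_sq_add_sq p
    · rw [indicator_of_notMem hp, norm_zero]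
      positivity
  have hloc : LocallyIntegrable (S.indicator f) :=
    locallyIntegrable_of_norm_le_rpow (by rw [hdim]; norm_num) (by rw [hdim]; norm_num)
      (ae_of_all _ hbound)
      ((Measurable.indicator (by unfold f axialIntegrand; fun_prop) hS).aestronglyMeasurable)
  rw [← integrable_indicator_iff hS]
  exact (hloc.integrableOn_isCompact (isCompact_closedBall 0 2)).integrable_of_forall_notMem_eq_zero
    fun p hp => indicator_of_notMem (fun h => hp (hS_ball h)) _

noncomputable def finThreeArrowEquivProd : (Fin 3 → ℝ) ≃ᵐ ℝ × ℝ × ℝ :=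
  (MeasurableEquiv.piFinSuccAbove (fun _ => ℝ) 0).trans
    ((MeasurableEquiv.refl ℝ).prodCongr MeasurableEquiv.finTwoArrow)

lemma finThreeArrowEquivProd_apply (y : Fin 3 → ℝ) :
    finThreeArrowEquivProd y = (y 0, y 1, y 2) := rfl

lemma volume_preserving_finThreeArrowEquivProd :
    MeasurePreserving finThreeArrowEquivProd volume volume :=
  ((MeasurePreserving.id volume).prod (volume_preserving_finTwoArrow ℝ)).comp
    (volume_preserving_piFinSuccAbove (fun _ => ℝ) 0)

theorem stmt_6_general (m : ℕ) (δ : ℝ) (hδ : 0 < δ) :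
    (∫ y in {y : Fin 3 → ℝ | (y 1) ^ 2 + (y 2) ^ 2 < 1 ∧ -1 < y 0 ∧ y 0 < 0},
        (1 / Real.sqrt ((y 0) ^ 2 + (y 1) ^ 2 + (y 2) ^ 2))
          * (-(y 0 - δ) / Real.sqrt ((y 0 - δ) ^ 2 + (y 1) ^ 2 + (y 2) ^ 2) ^ 3)
          * (y 0) ^ m)
      = (-1 : ℝ) ^ m * (2 * Real.pi) *
          ∫ y₁ in (0 : ℝ)..1, (y₁ + δ) * y₁ ^ m *
            ∫ s in y₁..Real.sqrt (y₁ ^ 2 + 1),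
              1 / Real.sqrt (s ^ 2 + δ * (2 * y₁ + δ)) ^ 3 := by
  set e := finThreeArrowEquivProd
  have hΩ : {y : Fin 3 → ℝ | (y 1) ^ 2 + (y 2) ^ 2 < 1 ∧ -1 < y 0 ∧ y 0 < 0}
      = e ⁻¹' (Ioo (-1) 0 ×ˢ unitDisc) := by
    ext y
    simp only [e, finThreeArrowEquivProd_apply, mem_preimage, mem_prod, mem_Ioo, unitDisc,
      mem_ofPred_eq]
    tauto
  have hflip (f : ℝ → ℝ) : ∫ t in Ioo (-1) 0, f t = ∫ y in (0 : ℝ)..1, f (-y) := by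
    rw [intervalIntegral.integral_comp_neg, intervalIntegral.integral_of_le (by norm_num),
      integral_Ioc_eq_integral_Ioo, neg_zero]
  calc _ = ∫ y in e ⁻¹' (Ioo (-1) 0 ×ˢ unitDisc),
        axialIntegrand m δ (e y).1 ((e y).2.1 ^ 2 + (e y).2.2 ^ 2) := by
        simp only [hΩ, e, finThreeArrowEquivProd_apply, axialIntegrand, add_assoc]
    _ = ∫ t in Ioo (-1) 0, ∫ x in unitDisc, axialIntegrand m δ t (x.1 ^ 2 + x.2 ^ 2) := by
        rw [volume_preserving_finThreeArrowEquivProd.setIntegral_preimage_emb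
          e.measurableEmbedding (fun p => axialIntegrand m δ p.1 (p.2.1 ^ 2 + p.2.2 ^ 2)),
          Measure.volume_eq_prod, setIntegral_prod _ (integrableOn_axialIntegrand m hδ)]
    _ = ∫ t in Ioo (-1) 0, 2 * π * ((δ - t) * t ^ m *
          ∫ s in -t..√(t ^ 2 + 1), 1 / √(s ^ 2 + δ * (δ - 2 * t)) ^ 3) :=
        setIntegral_congr_fun measurableSet_Ioo fun t ht =>
          integral_unitDisc_axialIntegrand m hδ ht.2
    _ = _ := by
        rw [hflip, ← intervalIntegral.integral_const_mul]
        refine intervalIntegral.integral_congr fun y _ => ?_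
        have hc : δ * (δ - 2 * -y) = δ * (2 * y + δ) := by ring
        simp only [neg_neg, even_two.neg_pow, hc, neg_pow y m]
        ring

/-- Reduction of the singular volume integral `∫_Ω (1/|y|) ∂₁(1/|y-z_δ|) y₁^m dy` over the
cylinder `Ω = {y₂²+y₃² < 1, -1 < y₁ < 0}` with `z_δ = (δ,0,0)` to an iterated integral. -/
theorem stmt_6 (m : ℕ) (hm : 1 ≤ m) (δ : ℝ) (hδ : 0 < δ) :
    (∫ y in {y : Fin 3 → ℝ | (y 1) ^ 2 + (y 2) ^ 2 < 1 ∧ -1 < y 0 ∧ y 0 < 0},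
        (1 / Real.sqrt ((y 0) ^ 2 + (y 1) ^ 2 + (y 2) ^ 2))
          * (-(y 0 - δ) / Real.sqrt ((y 0 - δ) ^ 2 + (y 1) ^ 2 + (y 2) ^ 2) ^ 3)
          * (y 0) ^ m)
      = (-1 : ℝ) ^ m * (2 * Real.pi) *
          ∫ y₁ in (0:ℝ)..1, (y₁ + δ) * y₁ ^ m *
            ∫ s in y₁..Real.sqrt (y₁ ^ 2 + 1),
              1 / Real.sqrt (s ^ 2 + δ * (2 * y₁ + δ)) ^ 3 :=
  stmt_6_general m δ hδ
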